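/- If L is a list-assignment for a finite graph G such that deg_G(v) + 1 ≤ |L(v)|·(d+1) for every vertex v, then G has an L-colouring in which every vertex has at most d neighbours of its own colour (i.e., an L-colouring with defect d). -/

import Mathlib

/-- The monochromatic subgraph of `G` under colouring `φ`. -/
def SimpleGraph.monoSub {V : Type*} (G : SimpleGraph V) (φ : V → ℕ) : SimpleGraph V where
  Adj u v := G.Adj u v ∧ φ u = φ v
  symm := ⟨fun u v h => ⟨G.adj_symm h.1, h.2.symm⟩⟩
  loopless := ⟨fun v h => G.irrefl h.1⟩

/-- The colouring `φ` has defect at most `d`: every vertex has at most `d`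
neighbours of its own colour. -/
def SimpleGraph.DefectLe {V : Type*} (G : SimpleGraph V) (φ : V → ℕ) (d : ℕ) : Prop :=
  ∀ v : V, {w : V | G.Adj v w ∧ φ w = φ v}.ncard ≤ d

/-- The colouring `φ` has clustering at most `c`: every connected component of
the monochromatic subgraph has at most `c` vertices. -/
def SimpleGraph.ClusterLe {V : Type*} (G : SimpleGraph V) (φ : V → ℕ) (c : ℕ) : Prop :=
  ∀ v : V, {w : V | (G.monoSub φ).Reachable v w}.ncard ≤ c

/-- Twice the number of edges of `G` inside the vertex set `s`
(the number of ordered adjacent pairs in `s`). -/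
noncomputable def SimpleGraph.degPairs {V : Type*} (G : SimpleGraph V) (s : Finset V) : ℕ :=
  {p : V × V | p.1 ∈ s ∧ p.2 ∈ s ∧ G.Adj p.1 p.2}.ncard

/-
Choose an `L`-colouring minimising the number of monochromatic edges. If some vertex `v` had
more than `d` neighbours of its own colour, then, since `deg v < |L v| (d + 1)`, pigeonhole gives
a colour `c ∈ L v` used by at most `d` neighbours of `v`. Recolouring `v` with `c` only affects
edges at `v`, so it strictly decreases the number of monochromatic edges, a contradiction.
-/

open Finset

theorem Finset.sum_sum_eq_two_nsmul_add_sum_erase_sum_erase {V M : Type*} [Fintype V]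
    [DecidableEq V] [AddCommMonoid M] {f : V → V → M} (hf : ∀ u w, f u w = f w u) (v : V)
    (hv : f v v = 0) :
    ∑ u, ∑ w, f u w = 2 • ∑ w, f v w + ∑ u ∈ univ.erase v, ∑ w ∈ univ.erase v, f u w := by
  have hcol : ∑ u ∈ univ.erase v, f u v = ∑ w, f v w := by
    rw [← add_sum_erase univ _ (mem_univ v), hv, zero_add]
    exact sum_congr rfl fun u _ => hf u v
  calc ∑ u, ∑ w, f u w
      = ∑ w, f v w + ∑ u ∈ univ.erase v, (f u v + ∑ w ∈ univ.erase v, f u w) := by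
        rw [← add_sum_erase univ _ (mem_univ v)]
        congr 1
        exact sum_congr rfl fun u _ => (add_sum_erase univ _ (mem_univ v)).symm
    _ = 2 • ∑ w, f v w + ∑ u ∈ univ.erase v, ∑ w ∈ univ.erase v, f u w := by
        rw [sum_add_distrib, hcol, two_nsmul, add_assoc]

namespace SimpleGraph

variable {V α : Type*} [Fintype V] (G : SimpleGraph V) [DecidableRel G.Adj] [DecidableEq α]

def monoDegree (φ : V → α) (v : V) : ℕ := #{w | G.Adj v w ∧ φ w = φ v}

theorem monoDegree_eq_sum (φ : V → α) (v : V) :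
    G.monoDegree φ v = ∑ w, if G.Adj v w ∧ φ w = φ v then 1 else 0 :=
  card_filter _ _

theorem sum_monoDegree_update_add [DecidableEq V] (φ : V → α) (v : V) (c : α) :
    ∑ u, G.monoDegree (Function.update φ v c) u + 2 * G.monoDegree φ v =
      ∑ u, G.monoDegree φ u + 2 * G.monoDegree (Function.update φ v c) v := by
  set ψ := Function.update φ v c
  have hsplit (χ : V → α) := sum_sum_eq_two_nsmul_add_sum_erase_sum_erase
    (f := fun u w => if G.Adj u w ∧ χ w = χ u then 1 else 0)
    (fun u w => by simp only [G.adj_comm u w, eq_comm]) v (by simp)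
  have haway : ∀ u ∈ univ.erase v, ∀ w ∈ univ.erase v,
      (if G.Adj u w ∧ ψ w = ψ u then 1 else 0) = if G.Adj u w ∧ φ w = φ u then 1 else 0 := by
    intro u hu w hw
    simp only [ψ, Function.update_of_ne (ne_of_mem_erase hu),
      Function.update_of_ne (ne_of_mem_erase hw)]
  simp only [monoDegree_eq_sum, hsplit ψ, hsplit φ, smul_eq_mul,
    sum_congr rfl fun u hu => sum_congr rfl (haway u hu)]
  ring

theorem exists_monoDegree_update_le [DecidableEq V] {φ : V → α} {v : V} {s : Finset α}
    {d : ℕ} (hs : G.degree v < #s * (d + 1)) :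
    ∃ c ∈ s, G.monoDegree (Function.update φ v c) v ≤ d := by
  obtain ⟨c, hc, hfiber⟩ := exists_card_fiber_lt_of_card_lt_mul (f := φ) hs
  have hfiber_eq :
      G.monoDegree (Function.update φ v c) v = #{w ∈ G.neighborFinset v | φ w = c} := by
    unfold monoDegree
    congr 1
    ext w
    by_cases hw : G.Adj v w
    · simp [hw, Function.update_of_ne hw.ne']
    · simp [hw]
  exact ⟨c, hc, by omega⟩

theorem defectLe_iff {φ : V → ℕ} {d : ℕ} : G.DefectLe φ d ↔ ∀ v, G.monoDegree φ v ≤ d := by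
  simp only [DefectLe, monoDegree, ← Set.ncard_coe_finset, coe_filter, mem_univ, true_and]

end SimpleGraph

open SimpleGraph in
theorem stmt0 {V : Type*} [Fintype V] (G : SimpleGraph V) (d : ℕ) (L : V → Finset ℕ)
    (hL : ∀ v : V, {w : V | G.Adj v w}.ncard + 1 ≤ (L v).card * (d + 1)) :
    ∃ φ : V → ℕ, (∀ v, φ v ∈ L v) ∧ G.DefectLe φ d := by
  classical
  have hdeg (v : V) : G.degree v < #(L v) * (d + 1) := by
    rw [← card_neighborSet_eq_degree, ← Nat.card_eq_fintype_card, Nat.card_coe_set_eq]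
    exact hL v
  have hne : (Fintype.piFinset L).Nonempty := Fintype.piFinset_nonempty.mpr fun v =>
    card_pos.mp (Nat.pos_of_mul_pos_right (Nat.zero_lt_of_lt (hdeg v)))
  obtain ⟨φ, hφL, hmin⟩ :=
    (Fintype.piFinset L).exists_min_image (fun φ => ∑ u, G.monoDegree φ u) hne
  rw [Fintype.mem_piFinset] at hφL
  refine ⟨φ, hφL, G.defectLe_iff.mpr fun v => ?_⟩
  by_contra! hbad
  obtain ⟨c, hc, hcd⟩ := G.exists_monoDegree_update_le (φ := φ) (hdeg v)
  have hupdate : Function.update φ v c ∈ Fintype.piFinset L := Fintype.mem_piFinset.mpr <|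
    (Function.forall_update_iff φ fun u a => a ∈ L u).mpr ⟨hc, fun u _ => hφL u⟩
  have hno_gain := hmin _ hupdate
  have hchange := G.sum_monoDegree_update_add φ v c
  omega
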